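/- arXiv:2603.14383 — 6 statements merged into one kernel-verified Lean document; each statement's English description precedes it below -/
import Mathlib

section
/- Let L ≥ 1, D ≥ 1, N ≥ 1, and let X₀, X₁ ∈ ℂ^{(L·D)×N} be matrices whose rows are indexed by pairs (ℓ,d) ∈ {0,…,L−1}×{1,…,D}; write X^{(ℓ)} ∈ ℂ^{D×N} for the ℓth block row of X. Assume the delay-shift relations X₁^{(ℓ)} = X₀^{(ℓ+1)} for all ℓ = 0,…,L−2. Let B⋆ ∈ ℂ^{D×(L·D)} be any minimizer of the last block row problem, i.e. ‖B⋆ X₀ − X₁^{(L−1)}‖_F ≤ ‖B X₀ − X₁^{(L−1)}‖_F for all B ∈ ℂ^{D×(L·D)}. Let C ∈ ℂ^{(L·D)×(L·D)} be the matrix whose entries satisfy C_{(ℓ,d),(ℓ',d')} = 1 if ℓ < L−1, ℓ' = ℓ+1 and d' = d, C_{(ℓ,d),(ℓ',d')} = 0 if ℓ < L−1 otherwise, and whose last block row equals B⋆ (i.e. C_{(L−1,d),(ℓ',d')} = (B⋆)_{d,(ℓ',d')}). Then C is a global minimizer of the least-squares problem: for every A ∈ ℂ^{(L·D)×(L·D)},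 ‖C X₀ − X₁‖_F ≤ ‖A X₀ − X₁‖_F. -/
/-!
Every block row of `C X₀ − X₁` except the last vanishes: the shift rows of `C` copy
`X₀^{(ℓ+1)}`, which equals `X₁^{(ℓ)}` by the delay-shift relations. Hence the residual of `C`
is exactly the last-block-row residual of `B⋆`. For any `A`, the residual of `A` is at least its
own last block row, which is the last-block-row residual of some `B`, hence at least that of `B⋆`.
-/

/-- Frobenius norm of a complex matrix. -/
noncomputable def frobNorm {m n : Type*} [Fintype m] [Fintype n]
    (A : Matrix m n ℂ) : ℝ :=
  Real.sqrt (∑ i, ∑ j, Complex.normSq (A i j))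

namespace Matrix

variable {ι κ m n α : Type*}

def blockRow (M : Matrix (ι × κ) n α) (ℓ : ι) : Matrix κ n α :=
  of fun d k => M (ℓ, d) k

@[simp]
theorem blockRow_apply (M : Matrix (ι × κ) n α) (ℓ : ι) (d : κ) (k : n) :
    blockRow M ℓ d k = M (ℓ, d) k :=
  rfl

theorem blockRow_mul [Fintype m] [NonUnitalNonAssocSemiring α]
    (A : Matrix (ι × κ) m α) (X : Matrix m n α) (ℓ : ι) :
    blockRow (A * X) ℓ = blockRow A ℓ * X :=
  rfl

theorem blockRow_sub [Sub α] (M M' : Matrix (ι × κ) n α) (ℓ : ι) :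
    blockRow (M - M') ℓ = blockRow M ℓ - blockRow M' ℓ :=
  rfl

theorem mul_apply_of_row_eq_indicator [Fintype m] [DecidableEq m] [NonAssocSemiring α]
    {C : Matrix n m α} {i : n} {j : m} (hC : ∀ j', C i j' = if j' = j then 1 else 0)
    (X : Matrix m ι α) (k : ι) :
    (C * X) i k = X j k := by
  simp [mul_apply, hC]

end Matrix

open Matrix

section Frobenius

variable {ι κ n : Type*} [Fintype ι] [Fintype κ] [Fintype n]

theorem frobNorm_blockRow_le (M : Matrix (ι × κ) n ℂ) (ℓ : ι) :
    frobNorm (blockRow M ℓ) ≤ frobNorm M := by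
  refine Real.sqrt_le_sqrt ?_
  rw [Fintype.sum_prod_type]
  exact Finset.single_le_sum (f := fun ℓ => ∑ d, ∑ k, Complex.normSq (M (ℓ, d) k))
    (fun _ _ => Finset.sum_nonneg fun _ _ => Finset.sum_nonneg fun _ _ => Complex.normSq_nonneg _)
    (Finset.mem_univ ℓ)

theorem frobNorm_eq_frobNorm_blockRow [DecidableEq ι] {M : Matrix (ι × κ) n ℂ} {ℓ : ι}
    (hM : ∀ ℓ' ≠ ℓ, blockRow M ℓ' = 0) :
    frobNorm M = frobNorm (blockRow M ℓ) := by
  unfold frobNorm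
  rw [Fintype.sum_prod_type, Finset.sum_eq_single ℓ]
  · rfl
  · intro ℓ' _ hℓ'
    simp [← blockRow_apply, hM ℓ' hℓ']
  · simp

end Frobenius

/-- The block-companion matrix built from the delay-shift structure and an
optimal last block row `B⋆` is a global minimizer of the full Frobenius
least-squares problem. -/
theorem block_companion_minimizer
    (L D N : ℕ) (hL : 1 ≤ L)
    (X₀ X₁ : Matrix (Fin L × Fin D) (Fin N) ℂ)
    -- delay-shift relations: X₁^{(ℓ)} = X₀^{(ℓ+1)} for ℓ = 0,…,L−2
    (hshift : ∀ (ℓ ℓ' : Fin L), (ℓ' : ℕ) = (ℓ : ℕ) + 1 →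
      ∀ (d : Fin D) (k : Fin N), X₁ (ℓ, d) k = X₀ (ℓ', d) k)
    (Bstar : Matrix (Fin D) (Fin L × Fin D) ℂ)
    -- B⋆ minimizes the last block row problem
    (hBstar : ∀ B : Matrix (Fin D) (Fin L × Fin D) ℂ,
      frobNorm (Bstar * X₀ - Matrix.of (fun d k => X₁ (⟨L - 1, by omega⟩, d) k)) ≤
      frobNorm (B * X₀ - Matrix.of (fun d k => X₁ (⟨L - 1, by omega⟩, d) k)))
    (C : Matrix (Fin L × Fin D) (Fin L × Fin D) ℂ)
    -- shift structure of C on block rows ℓ < L−1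
    (hCshift : ∀ (ℓ ℓ' : Fin L) (d d' : Fin D), (ℓ : ℕ) < L - 1 →
      C (ℓ, d) (ℓ', d') = if (ℓ' : ℕ) = (ℓ : ℕ) + 1 ∧ d' = d then 1 else 0)
    -- last block row of C equals B⋆
    (hClast : ∀ (d : Fin D) (j : Fin L × Fin D),
      C (⟨L - 1, by omega⟩, d) j = Bstar d j) :
    ∀ A : Matrix (Fin L × Fin D) (Fin L × Fin D) ℂ,
      frobNorm (C * X₀ - X₁) ≤ frobNorm (A * X₀ - X₁) := by
  intro A
  set last : Fin L := ⟨L - 1, by omega⟩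
  have hshift_rows : ∀ ℓ ≠ last, blockRow (C * X₀ - X₁) ℓ = 0 := by
    intro ℓ hℓ
    have hℓ_lt : (ℓ : ℕ) < L - 1 := by
      have : (ℓ : ℕ) ≠ L - 1 := fun h => hℓ (Fin.ext h)
      omega
    set next : Fin L := ⟨ℓ + 1, by omega⟩
    ext d k
    have hrow : ∀ j, C (ℓ, d) j = if j = (next, d) then 1 else 0 := by
      rintro ⟨ℓ', d'⟩
      simp [hCshift ℓ ℓ' d d' hℓ_lt, Prod.ext_iff, Fin.ext_iff, next]
    simp [mul_apply_of_row_eq_indicator hrow, hshift ℓ next rfl d k]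
  have hlast_row : blockRow (C * X₀ - X₁) last = Bstar * X₀ - blockRow X₁ last := by
    ext d k
    simp [mul_apply, hClast, last]
  calc frobNorm (C * X₀ - X₁)
      = frobNorm (Bstar * X₀ - blockRow X₁ last) := by
        rw [frobNorm_eq_frobNorm_blockRow hshift_rows, hlast_row]
    _ ≤ frobNorm (blockRow A last * X₀ - blockRow X₁ last) := hBstar _
    _ = frobNorm (blockRow (A * X₀ - X₁) last) := by rw [blockRow_sub, blockRow_mul]
    _ ≤ frobNorm (A * X₀ - X₁) := frobNorm_blockRow_le _ _
end

section
/- Let L ≥ 1, D ≥ 1, and let C ∈ ℂ^{(L·D)×(L·D)} be a block-companion matrix with blocks B₁,…,B_L ∈ ℂ^{D×D}, and let μ ∈ ℂ. A nonzero vector v ∈ ℂ^{L·D} satisfies C v = μ v if and only if there exists a nonzero φ ∈ ℂ^{D} such that v = v_L(μ) ⊗ φ and (B₁ + μ B₂ + ⋯ + μ^{L−1} B_L) φ = μ^L φ. -/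
/-- A nonzero vector is an eigenvector of a block-companion matrix with
eigenvalue `μ` iff it has Kronecker–Vandermonde form `v_L(μ) ⊗ φ` with a
nonzero `φ` satisfying the matrix-polynomial eigenrelation
`(B₁ + μ B₂ + ⋯ + μ^{L−1} B_L) φ = μ^L φ`. -/
theorem block_companion_eigenvector_iff_kv
    (L D : ℕ) (hL : 1 ≤ L) (hD : 1 ≤ D)
    (B : Fin L → Matrix (Fin D) (Fin D) ℂ)
    (C : Matrix (Fin L × Fin D) (Fin L × Fin D) ℂ)
    -- shift structure of C on block rows ℓ < L−1
    (hCshift : ∀ (ℓ ℓ' : Fin L) (d d' : Fin D), (ℓ : ℕ) < L - 1 →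
      C (ℓ, d) (ℓ', d') = if (ℓ' : ℕ) = (ℓ : ℕ) + 1 ∧ d' = d then 1 else 0)
    -- last block row of C is given by the blocks B₁,…,B_L
    (hClast : ∀ (d : Fin D) (ℓ' : Fin L) (d' : Fin D),
      C (⟨L - 1, by omega⟩, d) (ℓ', d') = B ℓ' d d')
    (μ : ℂ) (v : Fin L × Fin D → ℂ) (hv : v ≠ 0) :
    C.mulVec v = μ • v ↔
      ∃ φ : Fin D → ℂ, φ ≠ 0 ∧
        (∀ (ℓ : Fin L) (d : Fin D), v (ℓ, d) = μ ^ (ℓ : ℕ) * φ d) ∧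
        (∑ ℓ : Fin L, μ ^ (ℓ : ℕ) • B ℓ).mulVec φ = μ ^ L • φ := by
  -- key sum computation: a shift row picks out the entry (n+1, d)
  have hsumshift : ∀ (w : Fin L × Fin D → ℂ) (n : ℕ) (h1 : n + 1 < L) (d : Fin D),
      ∑ p : Fin L × Fin D, C (⟨n, by omega⟩, d) p * w p = w (⟨n + 1, h1⟩, d) := by
    intro w n h1 d
    have hlt : ((⟨n, by omega⟩ : Fin L) : ℕ) < L - 1 := by simp; omega
    calc ∑ p : Fin L × Fin D, C (⟨n, by omega⟩, d) p * w p
        = ∑ p : Fin L × Fin D, (if p = (⟨n + 1, h1⟩, d) then w p else 0) := by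
          apply Finset.sum_congr rfl
          intro p _
          have hC := hCshift ⟨n, by omega⟩ p.1 d p.2 hlt
          rw [show ((⟨n, by omega⟩, d) : Fin L × Fin D) = (⟨n, by omega⟩, d) from rfl]
          rw [show C (⟨n, by omega⟩, d) p = C (⟨n, by omega⟩, d) (p.1, p.2) by rw [Prod.mk.eta]]
          rw [hC]
          by_cases hp : p = (⟨n + 1, h1⟩, d)
          · subst hp; simp
          · have hcond : ¬(((p.1 : ℕ) = (⟨n, by omega⟩ : Fin L) + 1) ∧ p.2 = d) := by
              rintro ⟨ha, hb⟩
              apply hp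
              have : p.1 = (⟨n + 1, h1⟩ : Fin L) := by
                apply Fin.ext; simpa using ha
              exact Prod.ext this hb
            rw [if_neg hcond, if_neg hp, zero_mul]
      _ = w (⟨n + 1, h1⟩, d) := by simp
  -- the last row sum
  have hsumlast : ∀ (w : Fin L × Fin D → ℂ) (d : Fin D),
      ∑ p : Fin L × Fin D, C (⟨L - 1, by omega⟩, d) p * w p
        = ∑ ℓ' : Fin L, ∑ d' : Fin D, B ℓ' d d' * w (ℓ', d') := by
    intro w d
    rw [Fintype.sum_prod_type]
    apply Finset.sum_congr rfl; intro ℓ' _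
    apply Finset.sum_congr rfl; intro d' _
    rw [hClast d ℓ' d']
  constructor
  · intro h
    have heig : ∀ i, ∑ j, C i j * v j = μ * v i := by
      intro i
      have := congrFun h i
      simpa [Matrix.mulVec, dotProduct] using this
    have hshift : ∀ (n : ℕ) (h1 : n + 1 < L) (d : Fin D),
        v (⟨n + 1, h1⟩, d) = μ * v (⟨n, by omega⟩, d) := by
      intro n h1 d
      rw [← hsumshift v n h1 d]
      exact heig (⟨n, by omega⟩, d)
    have hpow : ∀ (n : ℕ) (hn : n < L) (d : Fin D),
        v (⟨n, hn⟩, d) = μ ^ n * v (⟨0, by omega⟩, d) := by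
      intro n
      induction n with
      | zero => intro hn d; simp
      | succ k ih =>
        intro hn d
        rw [hshift k hn d, ih (by omega) d, pow_succ]
        ring
    refine ⟨fun d => v (⟨0, by omega⟩, d), ?_, ?_, ?_⟩
    · intro hφ
      apply hv
      funext p
      have := hpow p.1 p.1.isLt p.2
      have h0 : v (⟨0, by omega⟩, p.2) = 0 := congrFun hφ p.2
      rw [Fin.eta, Prod.mk.eta] at this
      rw [this, h0, mul_zero, Pi.zero_apply]
    · intro ℓ d
      have := hpow ℓ ℓ.isLt d
      rwa [Fin.eta] at this
    · funext d
      have hrow := heig (⟨L - 1, by omega⟩, d)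
      rw [hsumlast v d] at hrow
      have hL1 : ((⟨L - 1, by omega⟩ : Fin L) : ℕ) = L - 1 := rfl
      have hvals : ∀ (ℓ' : Fin L) (d' : Fin D),
          v (ℓ', d') = μ ^ (ℓ' : ℕ) * v (⟨0, by omega⟩, d') := by
        intro ℓ' d'
        have := hpow ℓ' ℓ'.isLt d'
        rwa [Fin.eta] at this
      have hlast : v (⟨L - 1, by omega⟩, d) = μ ^ (L - 1) * v (⟨0, by omega⟩, d) :=
        hvals ⟨L - 1, by omega⟩ d
      simp only [Matrix.mulVec, dotProduct, Matrix.sum_apply, Matrix.smul_apply,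
        Pi.smul_apply, smul_eq_mul, Finset.sum_mul]
      rw [Finset.sum_comm]
      calc ∑ ℓ' : Fin L, ∑ d' : Fin D, μ ^ (ℓ' : ℕ) * B ℓ' d d' * v (⟨0, by omega⟩, d')
          = ∑ ℓ' : Fin L, ∑ d' : Fin D, B ℓ' d d' * v (ℓ', d') := by
            apply Finset.sum_congr rfl; intro ℓ' _
            apply Finset.sum_congr rfl; intro d' _
            rw [hvals ℓ' d']; ring
        _ = μ * v (⟨L - 1, by omega⟩, d) := hrow
        _ = μ ^ L * v (⟨0, by omega⟩, d) := by
            rw [hlast, ← mul_assoc, ← pow_succ']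
            congr 2
            omega
  · rintro ⟨φ, hφ, hform, heig⟩
    funext p
    obtain ⟨ℓ, d⟩ := p
    simp only [Matrix.mulVec, dotProduct, Pi.smul_apply, smul_eq_mul]
    by_cases hℓ : (ℓ : ℕ) < L - 1
    · have h1 : (ℓ : ℕ) + 1 < L := by omega
      have hℓeq : ℓ = (⟨(ℓ : ℕ), by omega⟩ : Fin L) := by apply Fin.ext; rfl
      rw [show ((ℓ, d) : Fin L × Fin D) = (⟨(ℓ : ℕ), by omega⟩, d) from by rw [← hℓeq]]
      rw [hsumshift v (ℓ : ℕ) h1 d]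
      rw [hform ⟨(ℓ : ℕ) + 1, h1⟩ d, hform ⟨(ℓ : ℕ), by omega⟩ d]
      simp [pow_succ]
      ring
    · have hℓeq : ℓ = (⟨L - 1, by omega⟩ : Fin L) := by
        apply Fin.ext; simp; omega
      rw [hℓeq, hform ⟨L - 1, by omega⟩ d]
      rw [hsumlast v d]
      have hrel := congrFun heig d
      simp only [Matrix.mulVec, dotProduct, Matrix.sum_apply, Matrix.smul_apply,
        Pi.smul_apply, smul_eq_mul, Finset.sum_mul] at hrel
      rw [Finset.sum_comm] at hrel
      calc ∑ ℓ' : Fin L, ∑ d' : Fin D, B ℓ' d d' * v (ℓ', d')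
          = ∑ ℓ' : Fin L, ∑ d' : Fin D, μ ^ (ℓ' : ℕ) * B ℓ' d d' * φ d' := by
            apply Finset.sum_congr rfl; intro ℓ' _
            apply Finset.sum_congr rfl; intro d' _
            rw [hform ℓ' d']; ring
        _ = μ ^ L * φ d := hrel
        _ = μ * (μ ^ (L - 1) * φ d) := by
            rw [← mul_assoc, ← pow_succ']
            congr 2
            omega
end

section
/- Let X₀, X₁ ∈ ℂ^{p×n}, let X₀⁺ be a Moore–Penrose pseudoinverse of X₀, and let M ≥ 1. Let U_M ∈ ℂ^{p×M}, V_M ∈ ℂ^{n×M}, and let Σ_M ∈ ℂ^{M×M} be invertible, and assume X₀⁺ U_M = V_M Σ_M⁻¹ and (X₀ X₀⁺) U_M = U_M (both hold when U_M, Σ_M, V_M are leading singular-value-decomposition factors of X₀). Let C ∈ ℂ^{p×p} satisfy C (X₀ X₀⁺) = X₁ X₀⁺. Then the reduced propagator A_M := U_Mᴴ X₁ V_M Σ_M⁻¹ satisfies A_M = U_Mᴴ C U_M; i.e., the truncated DMD propagator is the compression of C onto the columns of U_M. -/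
open Matrix

/-- The truncated DMD propagator `A_M = U_Mᴴ X₁ V_M Σ_M⁻¹` is the compression
`U_Mᴴ C U_M` of any matrix `C` satisfying `C (X₀ X₀⁺) = X₁ X₀⁺`. -/
theorem reduced_propagator_is_compression
    (p n M : ℕ) (hM : 1 ≤ M)
    (X₀ X₁ : Matrix (Fin p) (Fin n) ℂ)
    (Xp : Matrix (Fin n) (Fin p) ℂ)
    -- Penrose equations
    (hP1 : X₀ * Xp * X₀ = X₀)
    (hP2 : Xp * X₀ * Xp = Xp)
    (hP3 : (X₀ * Xp)ᴴ = X₀ * Xp)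
    (hP4 : (Xp * X₀)ᴴ = Xp * X₀)
    (U : Matrix (Fin p) (Fin M) ℂ)
    (V : Matrix (Fin n) (Fin M) ℂ)
    (Sig Sinv : Matrix (Fin M) (Fin M) ℂ)
    -- Σ_M is invertible with inverse Σinv
    (hS₁ : Sig * Sinv = 1) (hS₂ : Sinv * Sig = 1)
    -- SVD-factor relations
    (hXpU : Xp * U = V * Sinv)
    (hPU : (X₀ * Xp) * U = U)
    (C : Matrix (Fin p) (Fin p) ℂ)
    (hC : C * (X₀ * Xp) = X₁ * Xp) :
    Uᴴ * X₁ * V * Sinv = Uᴴ * C * U := by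
  calc Uᴴ * X₁ * V * Sinv = Uᴴ * X₁ * (Xp * U) := by rw [hXpU, Matrix.mul_assoc]
    _ = Uᴴ * (C * (X₀ * Xp)) * U := by rw [hC]; simp only [Matrix.mul_assoc]
    _ = Uᴴ * C * U := by rw [Matrix.mul_assoc Uᴴ, Matrix.mul_assoc C, hPU, ← Matrix.mul_assoc]
end

section
/- Let X₀, X₁ ∈ ℂ^{p×n}, let X₀⁺ be a Moore–Penrose pseudoinverse of X₀, and let M ≥ 1. Let U_M ∈ ℂ^{p×M}, V_M ∈ ℂ^{n×M}, and let Σ_M ∈ ℂ^{M×M} be invertible, and assume X₀⁺ U_M = V_M Σ_M⁻¹ and (X₀ X₀⁺) U_M = U_M. Let C ∈ ℂ^{p×p} satisfy C (X₀ X₀⁺) = X₁ X₀⁺. Then for every w ∈ ℂ^{M}, C (U_M w) = X₁ V_M Σ_M⁻¹ w; i.e., C maps each projected DMD mode U_M w to the corresponding exact DMD mode X₁ V_M Σ_M⁻¹ w. -/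
open Matrix

/-- A matrix `C` with `C (X₀ X₀⁺) = X₁ X₀⁺` maps each projected DMD mode
`U_M w` to the corresponding exact DMD mode `X₁ V_M Σ_M⁻¹ w`. -/
theorem companion_maps_projected_to_exact
    (p n M : ℕ) (hM : 1 ≤ M)
    (X₀ X₁ : Matrix (Fin p) (Fin n) ℂ)
    (Xp : Matrix (Fin n) (Fin p) ℂ)
    -- Penrose equations
    (hP1 : X₀ * Xp * X₀ = X₀)
    (hP2 : Xp * X₀ * Xp = Xp)
    (hP3 : (X₀ * Xp)ᴴ = X₀ * Xp)
    (hP4 : (Xp * X₀)ᴴ = Xp * X₀)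
    (U : Matrix (Fin p) (Fin M) ℂ)
    (V : Matrix (Fin n) (Fin M) ℂ)
    (Sig Sinv : Matrix (Fin M) (Fin M) ℂ)
    -- Σ_M is invertible with inverse Sinv
    (hS₁ : Sig * Sinv = 1) (hS₂ : Sinv * Sig = 1)
    -- SVD-factor relations
    (hXpU : Xp * U = V * Sinv)
    (hPU : (X₀ * Xp) * U = U)
    (C : Matrix (Fin p) (Fin p) ℂ)
    (hC : C * (X₀ * Xp) = X₁ * Xp) :
    ∀ w : Fin M → ℂ, C.mulVec (U.mulVec w) = (X₁ * V * Sinv).mulVec w := by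
  have h : C * U = X₁ * V * Sinv := by
    calc C * U = C * ((X₀ * Xp) * U) := by rw [hPU]
    _ = (C * (X₀ * Xp)) * U := by simp [Matrix.mul_assoc]
    _ = X₁ * (Xp * U) := by rw [hC, Matrix.mul_assoc]
    _ = X₁ * V * Sinv := by rw [hXpU, Matrix.mul_assoc]
  intro w
  rw [mulVec_mulVec, h]
end

section
/- Let X₀, X₁ ∈ ℂ^{p×n}, let X₀⁺ be a Moore–Penrose pseudoinverse of X₀, and let M ≥ 1. Let U_M ∈ ℂ^{p×M} with U_Mᴴ U_M = I, let V_M ∈ ℂ^{n×M}, let Σ_M ∈ ℂ^{M×M} be invertible, and assume X₀⁺ U_M = V_M Σ_M⁻¹ and (X₀ X₀⁺) U_M = U_M. Let C ∈ ℂ^{p×p} satisfy C (X₀ X₀⁺) = X₁ X₀⁺. Define A_M := U_Mᴴ X₁ V_M Σ_M⁻¹, and let (λ, w) be an eigenpair of A_M, i.e. A_M w = λ w. Define the projected mode φᵖ := U_M w and the exact mode φᵉ := X₁ V_M Σ_M⁻¹ w. Then (C − λ I) φᵖ = (I − U_M U_Mᴴ) φᵉ; that is, the eigenrelation residual of the projected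 eigenpair with respect to C equals the component of the exact mode orthogonal to the column space of U_M. -/
open Matrix

/-- Residual–companion identity: for an eigenpair `(λ, w)` of the reduced
propagator `A_M = U_Mᴴ X₁ V_M Σ_M⁻¹`, the eigenrelation residual of the
projected mode with respect to `C` equals the component of the exact mode
orthogonal to the column space of `U_M`:
`(C − λ I) φᵖ = (I − U_M U_Mᴴ) φᵉ`. -/
theorem residual_companion_identity
    (p n M : ℕ) (hM : 1 ≤ M)
    (X₀ X₁ : Matrix (Fin p) (Fin n) ℂ)
    (Xp : Matrix (Fin n) (Fin p) ℂ)
    -- Penrose equations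
    (hP1 : X₀ * Xp * X₀ = X₀)
    (hP2 : Xp * X₀ * Xp = Xp)
    (hP3 : (X₀ * Xp)ᴴ = X₀ * Xp)
    (hP4 : (Xp * X₀)ᴴ = Xp * X₀)
    (U : Matrix (Fin p) (Fin M) ℂ)
    (hU : Uᴴ * U = 1)
    (V : Matrix (Fin n) (Fin M) ℂ)
    (Sig Sinv : Matrix (Fin M) (Fin M) ℂ)
    -- Σ_M is invertible with inverse Sinv
    (hS₁ : Sig * Sinv = 1) (hS₂ : Sinv * Sig = 1)
    -- SVD-factor relations
    (hXpU : Xp * U = V * Sinv)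
    (hPU : (X₀ * Xp) * U = U)
    (C : Matrix (Fin p) (Fin p) ℂ)
    (hC : C * (X₀ * Xp) = X₁ * Xp)
    (lam : ℂ) (w : Fin M → ℂ)
    (heig : (Uᴴ * X₁ * V * Sinv).mulVec w = lam • w) :
    (C - lam • (1 : Matrix (Fin p) (Fin p) ℂ)).mulVec (U.mulVec w) =
      ((1 : Matrix (Fin p) (Fin p) ℂ) - U * Uᴴ).mulVec
        ((X₁ * V * Sinv).mulVec w) := by
  have hCU : C * U = X₁ * V * Sinv := by
    calc C * U = C * (X₀ * Xp) * U := by rw [Matrix.mul_assoc, hPU]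
    _ = X₁ * (Xp * U) := by rw [hC, Matrix.mul_assoc]
    _ = X₁ * V * Sinv := by rw [hXpU, Matrix.mul_assoc]
  have h1 : C.mulVec (U.mulVec w) = (X₁ * V * Sinv).mulVec w := by
    rw [Matrix.mulVec_mulVec, hCU]
  have h2 : Uᴴ.mulVec ((X₁ * V * Sinv).mulVec w) = lam • w := by
    rw [Matrix.mulVec_mulVec, ← Matrix.mul_assoc, ← Matrix.mul_assoc, heig]
  have h3 : (U * Uᴴ).mulVec ((X₁ * V * Sinv).mulVec w) = lam • U.mulVec w := by
    rw [← Matrix.mulVec_mulVec, h2, Matrix.mulVec_smul]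
  rw [Matrix.sub_mulVec, Matrix.sub_mulVec, Matrix.one_mulVec,
    Matrix.smul_mulVec, Matrix.one_mulVec, h1, h3]
end

section
/- Let L ≥ 1, D ≥ 1, p = L·D, and let X₀, X₁ ∈ ℂ^{p×n}, X₀⁺ a Moore–Penrose pseudoinverse of X₀, M ≥ 1, U_M ∈ ℂ^{p×M} with U_Mᴴ U_M = I, V_M ∈ ℂ^{n×M}, Σ_M ∈ ℂ^{M×M} invertible, with X₀⁺ U_M = V_M Σ_M⁻¹ and (X₀ X₀⁺) U_M = U_M. Suppose C ∈ ℂ^{p×p} is a block-companion matrix with blocks B₁,…,B_L ∈ ℂ^{D×D} satisfying C (X₀ X₀⁺) = X₁ X₀⁺. Let A_M := U_Mᴴ X₁ V_M Σ_M⁻¹, let A_M w = λ w with w ≠ 0, and set φᵖ := U_M w and φᵉ := X₁ V_M Σ_M⁻¹ w. If the estimated-subspace residual vanishes, i.e. (I − U_M U_Mᴴ) φᵉ = 0, then there exists a nonzero φ₀ ∈ ℂ^{D} such that φᵖ = v_L(λ) ⊗ φ₀; that is, the projected mode has exact Kronecker–Vandermonde structure. -/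
open Matrix

/-- If the estimated-subspace residual of an exact DMD mode vanishes, then the
associated projected DMD mode has exact Kronecker–Vandermonde structure. -/
theorem zero_residual_implies_kv_structure
    (L D : ℕ) (hL : 1 ≤ L) (hD : 1 ≤ D)
    (n M : ℕ) (hM : 1 ≤ M)
    (X₀ X₁ : Matrix (Fin L × Fin D) (Fin n) ℂ)
    (Xp : Matrix (Fin n) (Fin L × Fin D) ℂ)
    -- Penrose equations
    (hP1 : X₀ * Xp * X₀ = X₀)
    (hP2 : Xp * X₀ * Xp = Xp)
    (hP3 : (X₀ * Xp)ᴴ = X₀ * Xp)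
    (hP4 : (Xp * X₀)ᴴ = Xp * X₀)
    (U : Matrix (Fin L × Fin D) (Fin M) ℂ)
    (hU : Uᴴ * U = 1)
    (V : Matrix (Fin n) (Fin M) ℂ)
    (Sig Sinv : Matrix (Fin M) (Fin M) ℂ)
    -- Σ_M is invertible with inverse Sinv
    (hS₁ : Sig * Sinv = 1) (hS₂ : Sinv * Sig = 1)
    -- SVD-factor relations
    (hXpU : Xp * U = V * Sinv)
    (hPU : (X₀ * Xp) * U = U)
    -- C is a block-companion matrix with blocks B₁,…,B_L
    (B : Fin L → Matrix (Fin D) (Fin D) ℂ)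
    (C : Matrix (Fin L × Fin D) (Fin L × Fin D) ℂ)
    (hCshift : ∀ (ℓ ℓ' : Fin L) (d d' : Fin D), (ℓ : ℕ) < L - 1 →
      C (ℓ, d) (ℓ', d') = if (ℓ' : ℕ) = (ℓ : ℕ) + 1 ∧ d' = d then 1 else 0)
    (hClast : ∀ (d : Fin D) (ℓ' : Fin L) (d' : Fin D),
      C (⟨L - 1, by omega⟩, d) (ℓ', d') = B ℓ' d d')
    (hC : C * (X₀ * Xp) = X₁ * Xp)
    (lam : ℂ) (w : Fin M → ℂ) (hw : w ≠ 0)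
    (heig : (Uᴴ * X₁ * V * Sinv).mulVec w = lam • w)
    -- the estimated-subspace residual vanishes
    (hres : ((1 : Matrix (Fin L × Fin D) (Fin L × Fin D) ℂ) - U * Uᴴ).mulVec
        ((X₁ * V * Sinv).mulVec w) = 0) :
    ∃ φ₀ : Fin D → ℂ, φ₀ ≠ 0 ∧
      ∀ (ℓ : Fin L) (d : Fin D),
        U.mulVec w (ℓ, d) = lam ^ (ℓ : ℕ) * φ₀ d := by

  set φ : Fin L × Fin D → ℂ := U.mulVec w with hφdef
  have hUw : Uᴴ.mulVec φ = w := by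
    rw [hφdef, Matrix.mulVec_mulVec, hU, Matrix.one_mulVec]
  have h1 : Uᴴ.mulVec ((X₁ * V * Sinv).mulVec w) = lam • w := by
    rw [Matrix.mulVec_mulVec, show Uᴴ * (X₁ * V * Sinv) = Uᴴ * X₁ * V * Sinv by
      simp [Matrix.mul_assoc], heig]
  have hφe : (X₁ * V * Sinv).mulVec w = lam • φ := by
    rw [Matrix.sub_mulVec, Matrix.one_mulVec, sub_eq_zero] at hres
    rw [hres, ← Matrix.mulVec_mulVec, h1, Matrix.mulVec_smul, hφdef]
  have hCU : C * U = X₁ * V * Sinv := by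
    have h2 : C * (X₀ * Xp * U) = X₁ * V * Sinv := by
      rw [← Matrix.mul_assoc, hC, Matrix.mul_assoc, hXpU, ← Matrix.mul_assoc]
    rwa [hPU] at h2
  have hCφ : C.mulVec φ = lam • φ := by
    rw [hφdef, Matrix.mulVec_mulVec, hCU, hφe]
  have hstep : ∀ (ℓ : Fin L) (hℓ : (ℓ : ℕ) < L - 1) (d : Fin D),
      φ (⟨(ℓ : ℕ) + 1, by omega⟩, d) = lam * φ (ℓ, d) := by
    intro ℓ hℓ d
    have h := congrFun hCφ (ℓ, d)
    have hrow : C.mulVec φ (ℓ, d) = φ (⟨(ℓ : ℕ) + 1, by omega⟩, d) := by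
      have : C.mulVec φ (ℓ, d) = ∑ j : Fin L × Fin D, C (ℓ, d) j * φ j := rfl
      rw [this, Finset.sum_eq_single ((⟨(ℓ : ℕ) + 1, by omega⟩ : Fin L), d)]
      · rw [hCshift ℓ _ d d hℓ]
        simp
      · rintro ⟨b1, b2⟩ _ hb
        rw [hCshift ℓ b1 d b2 hℓ, if_neg, zero_mul]
        rintro ⟨hb1, hb2⟩
        exact hb (Prod.ext (Fin.ext hb1) hb2)
      · intro h; exact absurd (Finset.mem_univ _) h
    rw [hrow] at h
    simpa using h
  have hall : ∀ (k : ℕ) (hk : k < L) (d : Fin D),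
      φ (⟨k, hk⟩, d) = lam ^ k * φ (⟨0, by omega⟩, d) := by
    intro k
    induction k with
    | zero => intro hk d; simp
    | succ m ih =>
      intro hk d
      have hm : m < L - 1 := by omega
      have hs := hstep ⟨m, by omega⟩ hm d
      rw [show lam ^ (m + 1) = lam * lam ^ m by ring, mul_assoc, ← ih (by omega) d]
      exact hs
  refine ⟨fun d => φ (⟨0, by omega⟩, d), ?_, ?_⟩
  · intro h0
    apply hw
    have hφ0 : φ = 0 := by
      funext x
      obtain ⟨⟨k, hk⟩, d⟩ := x
      rw [hall k hk d, show φ (⟨0, by omega⟩, d) = 0 by simpa using congrFun h0 d,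
        mul_zero]
      simp
    rw [← hUw, hφ0, Matrix.mulVec_zero]
  · intro ℓ d
    exact hall ℓ ℓ.isLt d
end
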